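/- Let F : Ω → H be a continuous frame for H with bounds 0 < A ≤ B and let θ be its transform operator. Then: (1) θ is injective and has closed range; (2) the pre-frame operator T = θ* : L²(Ω, 𝕜) → H is surjective; (3) the frame operator S = θ* ∘ θ is self-adjoint, satisfies A·‖u‖² ≤ re⟪S u, u⟫ ≤ B·‖u‖² for all u ∈ H, and is bijective. -/

import Mathlib

open MeasureTheory ContinuousLinearMap

/-!
The frame inequalities say exactly that `A‖u‖² ≤ ‖θ u‖² ≤ B‖u‖²`, and
`‖θ u‖² = re⟪θ* θ u, u⟫`. The lower bound makes `θ` bounded below, hence injective with closed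
range, and makes `S = θ* θ` coercive. A coercive operator is bounded below, so its range is
closed, and any vector orthogonal to the range satisfies `A‖w‖² ≤ re⟪S w, w⟫ = 0`; hence `S` is
bijective, and `θ*` is surjective because `S` factors through it.
-/

theorem MeasureTheory.Lp.norm_sq_eq_integral_norm_sq {α E : Type*} [MeasurableSpace α]
    {μ : Measure α} [NormedAddCommGroup E] (f : Lp E 2 μ) :
    ‖f‖ ^ 2 = ∫ a, ‖f a‖ ^ 2 ∂μ := by
  rw [Lp.norm_def, (Lp.memLp f).eLpNorm_eq_integral_rpow_norm two_ne_zero ENNReal.ofNat_ne_top,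
    ENNReal.toReal_ofReal (by positivity)]
  simp only [ENNReal.toReal_ofNat, Real.rpow_two]
  exact_mod_cast Real.rpow_inv_natCast_pow (integral_nonneg fun _ => by positivity) two_ne_zero

theorem MeasureTheory.Lp.norm_sq_eq_integral_norm_sq_of_ae_eq {α E : Type*} [MeasurableSpace α]
    {μ : Measure α} [NormedAddCommGroup E] {f : Lp E 2 μ} {g : α → E} (hfg : f =ᵐ[μ] g) :
    ‖f‖ ^ 2 = ∫ a, ‖g a‖ ^ 2 ∂μ := by
  rw [Lp.norm_sq_eq_integral_norm_sq]
  exact integral_congr_ae (hfg.fun_comp fun x => ‖x‖ ^ 2)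

theorem ContinuousLinearMap.antilipschitz_of_mul_norm_le {𝕜 E F : Type*}
    [NontriviallyNormedField 𝕜] [SeminormedAddCommGroup E] [SeminormedAddCommGroup F]
    [NormedSpace 𝕜 E] [NormedSpace 𝕜 F] (f : E →L[𝕜] F) {c : ℝ} (hc : 0 < c)
    (h : ∀ x, c * ‖x‖ ≤ ‖f x‖) : AntilipschitzWith (Real.toNNReal c⁻¹) f :=
  f.antilipschitz_of_bound fun x => by
    rw [Real.coe_toNNReal _ (inv_nonneg.2 hc.le), inv_mul_eq_div, le_div_iff₀' hc]
    exact h x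

namespace ContinuousLinearMap

variable {𝕜 E : Type*} [RCLike 𝕜] [NormedAddCommGroup E] [InnerProductSpace 𝕜 E]

theorem mul_norm_le_norm_apply_of_coercive {S : E →L[𝕜] E} {c : ℝ}
    (h : ∀ x, c * ‖x‖ ^ 2 ≤ RCLike.re (inner 𝕜 (S x) x)) (x : E) : c * ‖x‖ ≤ ‖S x‖ := by
  rcases (norm_nonneg x).eq_or_lt with hx | hx
  · rw [← hx, mul_zero]
    exact norm_nonneg _
  · refine le_of_mul_le_mul_right ?_ hx
    calc c * ‖x‖ * ‖x‖ = c * ‖x‖ ^ 2 := by ring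
      _ ≤ RCLike.re (inner 𝕜 (S x) x) := h x
      _ ≤ ‖S x‖ * ‖x‖ := re_inner_le_norm _ _

theorem bijective_of_coercive [CompleteSpace E] {S : E →L[𝕜] E} {c : ℝ} (hc : 0 < c)
    (h : ∀ x, c * ‖x‖ ^ 2 ≤ RCLike.re (inner 𝕜 (S x) x)) : Function.Bijective S := by
  have hanti := S.antilipschitz_of_mul_norm_le hc (mul_norm_le_norm_apply_of_coercive h)
  refine ⟨hanti.injective, ?_⟩
  set K := LinearMap.range (S : E →ₗ[𝕜] E)
  have hK_closed : IsClosed (K : Set E) := by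
    rw [LinearMap.coe_range]
    exact hanti.isClosed_range S.uniformContinuous
  have : CompleteSpace K := hK_closed.completeSpace_coe
  have hK_orth : Kᗮ = ⊥ := by
    refine (Submodule.eq_bot_iff _).2 fun w hw => ?_
    have hw0 : c * ‖w‖ ^ 2 ≤ 0 := by
      simpa [hw (S w) ⟨w, rfl⟩] using h w
    have hw_sq : ‖w‖ ^ 2 ≤ 0 := by nlinarith
    exact norm_eq_zero.1 (pow_eq_zero_iff two_ne_zero |>.1 (hw_sq.antisymm (sq_nonneg _)))
  exact LinearMap.range_eq_top.1 (Submodule.orthogonal_eq_bot_iff.1 hK_orth)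

end ContinuousLinearMap

theorem continuous_frame_associated_operators
    {𝕜 : Type*} [RCLike 𝕜]
    {H : Type*} [NormedAddCommGroup H] [InnerProductSpace 𝕜 H] [CompleteSpace H]
    {Ω : Type*} [MeasurableSpace Ω] {μ : Measure Ω}
    (F : Ω → H) (A B : ℝ) (hA : 0 < A)
    (hframe : ∀ u : H, A * ‖u‖ ^ 2 ≤ ∫ ω, ‖(inner 𝕜 (F ω) u : 𝕜)‖ ^ 2 ∂μ ∧
      ∫ ω, ‖(inner 𝕜 (F ω) u : 𝕜)‖ ^ 2 ∂μ ≤ B * ‖u‖ ^ 2)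
    (θ : H →L[𝕜] Lp 𝕜 2 μ)
    (hθ : ∀ u : H, (θ u : Ω → 𝕜) =ᵐ[μ] fun ω => (inner 𝕜 (F ω) u : 𝕜)) :
    Function.Injective ⇑θ ∧ IsClosed (Set.range ⇑θ) ∧
    Function.Surjective ⇑(ContinuousLinearMap.adjoint θ) ∧
    IsSelfAdjoint ((ContinuousLinearMap.adjoint θ).comp θ) ∧
    (∀ u : H,
      A * ‖u‖ ^ 2 ≤ RCLike.re (inner 𝕜 (((ContinuousLinearMap.adjoint θ).comp θ) u) u : 𝕜) ∧
      RCLike.re (inner 𝕜 (((ContinuousLinearMap.adjoint θ).comp θ) u) u : 𝕜) ≤ B * ‖u‖ ^ 2) ∧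
    Function.Bijective ⇑((ContinuousLinearMap.adjoint θ).comp θ) := by
  have hθ_bounds : ∀ u, A * ‖u‖ ^ 2 ≤ ‖θ u‖ ^ 2 ∧ ‖θ u‖ ^ 2 ≤ B * ‖u‖ ^ 2 := fun u => by
    rw [Lp.norm_sq_eq_integral_norm_sq_of_ae_eq (hθ u)]
    exact hframe u
  have hS_bounds : ∀ u, A * ‖u‖ ^ 2 ≤ RCLike.re (inner 𝕜 ((adjoint θ ∘L θ) u) u) ∧
      RCLike.re (inner 𝕜 ((adjoint θ ∘L θ) u) u) ≤ B * ‖u‖ ^ 2 := fun u => by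
    rw [← apply_norm_sq_eq_inner_adjoint_left]
    exact hθ_bounds u
  have hθ_anti := θ.antilipschitz_of_mul_norm_le (Real.sqrt_pos.2 hA) fun u => by
    simpa [Real.sqrt_mul hA.le, Real.sqrt_sq (norm_nonneg _)] using
      Real.sqrt_le_sqrt (hθ_bounds u).1
  have hS_bij := bijective_of_coercive hA fun u => (hS_bounds u).1
  exact ⟨hθ_anti.injective, hθ_anti.isClosed_range θ.uniformContinuous, Function.Surjective.of_comp (g := θ) hS_bij.2,
    (isPositive_adjoint_comp_self θ).isSelfAdjoint, hS_bounds, hS_bij⟩
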